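/- Let G be a closed subgroup of linear isometries of ℝ^N with ℓ(G) finite, and for z in the unit sphere with #Gz = ℓ(G) define μ(Gz) = inf{|gz - hz| : g, h ∈ G, gz ≠ hz} if #Gz ≥ 2, and μ(Gz) = 2|z| if #Gz = 1. Then the infimum μ_G = inf{μ(Gz) : z ∈ Σ} is attained by some z ∈ Σ, where Σ = {x ∈ S^{N-1} : #Gx = ℓ(G)}. -/

import Mathlib

open Set Metric

noncomputable section

abbrev Euc (N : ℕ) := EuclideanSpace ℝ (Fin N)

/-- The orbit of a point `x` under a subgroup `G` of linear isometries. -/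
def Gorbit {N : ℕ} (G : Subgroup (Euc N ≃ₗᵢ[ℝ] Euc N)) (x : Euc N) : Set (Euc N) :=
  {y | ∃ g ∈ G, g x = y}

/-- The set `Σ` of unit vectors whose orbit has minimal cardinality `ℓ`. -/
def GSigma {N : ℕ} (G : Subgroup (Euc N ≃ₗᵢ[ℝ] Euc N)) (ℓ : ℕ∞) : Set (Euc N) :=
  {x ∈ sphere (0 : Euc N) 1 | (Gorbit G x).encard = ℓ}

/-- `μ(Gz)`: the least distance between two distinct points of the orbit of `z`,
or `2‖z‖` if the orbit is a singleton. -/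
def Gmu {N : ℕ} (G : Subgroup (Euc N ≃ₗᵢ[ℝ] Euc N)) (z : Euc N) : ℝ :=
  if 2 ≤ (Gorbit G z).encard then
    sInf {d : ℝ | ∃ g ∈ G, ∃ h ∈ G, g z ≠ h z ∧ d = dist (g z) (h z)}
  else 2 * ‖z‖


/-! Σ is compact because the orbit size `#Gx` is lower semicontinuous: finitely many group
elements that separate the points of `Gz` still separate their values at every `w` near `z`.
On Σ all orbits have the same finite size `ℓ`, so these elements enumerate the whole orbit of
such `w`, and near `z` the function `μ` is the minimum of the finitely many continuous
functions `w ↦ |gw - hw|`. -/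

theorem Set.exists_finset_injOn_image_eq {α β : Type*} {f : α → β} {s : Set α} {t : Set β}
    (hts : t ⊆ f '' s) (ht : t.Finite) :
    ∃ T : Finset α, ↑T ⊆ s ∧ InjOn f T ∧ f '' T = t := by
  obtain ⟨u, hus, rfl⟩ := subset_image_iff.mp hts
  obtain ⟨v, hvu, hv⟩ := exists_subset_bijOn u f
  have hvfin : v.Finite := Finite.of_finite_image (hv.image_eq ▸ ht) hv.injOn
  exact ⟨hvfin.toFinset, by simpa using hvu.trans hus, by simpa using hv.injOn,
    by simpa using hv.image_eq⟩

theorem Filter.eventually_injOn_eval {ι X Y : Type*} [TopologicalSpace X] [TopologicalSpace Y]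
    [T2Space Y] {f : ι → X → Y} {T : Finset ι} (hf : ∀ i ∈ T, Continuous (f i)) {z : X}
    (hz : InjOn (fun i => f i z) T) : ∀ᶠ w in nhds z, InjOn (fun i => f i w) T := by
  have hpair : ∀ i ∈ T, ∀ j ∈ T, ∀ᶠ w in nhds z, f i w = f j w → i = j := by
    intro i hi j hj
    by_cases hij : i = j
    · exact Filter.Eventually.of_forall fun _ _ => hij
    · have hne : f i z ≠ f j z := fun h => hij (hz hi hj h)
      filter_upwards [(isOpen_ne_fun (hf i hi) (hf j hj)).mem_nhds hne] with w hw h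
      exact absurd h hw
  filter_upwards [(Filter.eventually_all_finset T).mpr fun i hi =>
    (Filter.eventually_all_finset T).mpr (hpair i hi)] with w hw i hi j hj
  exact hw i hi j hj

namespace Gorbit

variable {N : ℕ} {G : Subgroup (Euc N ≃ₗᵢ[ℝ] Euc N)}

theorem image_subset {T : Set (Euc N ≃ₗᵢ[ℝ] Euc N)} (hTG : T ⊆ G) (x : Euc N) :
    (fun g : Euc N ≃ₗᵢ[ℝ] Euc N => g x) '' T ⊆ Gorbit G x :=
  image_mono hTG

theorem encard_le_of_injOn {T : Set (Euc N ≃ₗᵢ[ℝ] Euc N)} (hTG : T ⊆ G) {x : Euc N}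
    (hinj : InjOn (fun g : Euc N ≃ₗᵢ[ℝ] Euc N => g x) T) : T.encard ≤ (Gorbit G x).encard :=
  hinj.encard_image ▸ Set.encard_le_encard (image_subset hTG x)

theorem eq_image_of_encard_le {T : Finset (Euc N ≃ₗᵢ[ℝ] Euc N)}
    (hTG : ↑T ⊆ (G : Set (Euc N ≃ₗᵢ[ℝ] Euc N))) {x : Euc N}
    (hinj : InjOn (fun g : Euc N ≃ₗᵢ[ℝ] Euc N => g x) T)
    (hx : (Gorbit G x).encard ≤ (T : Set (Euc N ≃ₗᵢ[ℝ] Euc N)).encard) :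
    Gorbit G x = (fun g : Euc N ≃ₗᵢ[ℝ] Euc N => g x) '' T :=
  ((T.finite_toSet.image _).eq_of_subset_of_encard_le (image_subset hTG x)
    (hinj.encard_image ▸ hx)).symm

theorem exists_finset_injOn_image_eq {x : Euc N} (hx : (Gorbit G x).Finite) :
    ∃ T : Finset (Euc N ≃ₗᵢ[ℝ] Euc N), ↑T ⊆ (G : Set (Euc N ≃ₗᵢ[ℝ] Euc N)) ∧
      InjOn (fun g : Euc N ≃ₗᵢ[ℝ] Euc N => g x) T ∧
      (fun g : Euc N ≃ₗᵢ[ℝ] Euc N => g x) '' T = Gorbit G x :=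
  Set.exists_finset_injOn_image_eq subset_rfl hx

theorem smul_eq_image (c : ℝ) (x : Euc N) : Gorbit G (c • x) = (c • ·) '' Gorbit G x := by
  ext y
  constructor
  · rintro ⟨g, hg, rfl⟩
    exact ⟨g x, ⟨g, hg, rfl⟩, (map_smul g c x).symm⟩
  · rintro ⟨_, ⟨g, hg, rfl⟩, rfl⟩
    exact ⟨g, hg, map_smul g c x⟩

end Gorbit

section

variable {N : ℕ} {G : Subgroup (Euc N ≃ₗᵢ[ℝ] Euc N)}

theorem lowerSemicontinuous_encard_Gorbit :
    LowerSemicontinuous fun x : Euc N => (Gorbit G x).encard := by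
  intro z n hn
  obtain ⟨S, hSz, hSn⟩ := exists_subset_encard_eq (Order.add_one_le_of_lt hn)
  have hS : S.Finite := encard_ne_top_iff.mp (by simp [hSn, hn.ne_top])
  obtain ⟨T, hTG, hinj, rfl⟩ := Set.exists_finset_injOn_image_eq hSz hS
  filter_upwards [Filter.eventually_injOn_eval (fun g _ => g.continuous) hinj] with w hw
  calc n < n + 1 := (ENat.lt_add_one_iff hn.ne_top).mpr le_rfl
    _ = (T : Set (Euc N ≃ₗᵢ[ℝ] Euc N)).encard := by rw [← hSn, hinj.encard_image]
    _ ≤ (Gorbit G w).encard := Gorbit.encard_le_of_injOn hTG hw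

theorem isClosed_GSigma {ℓ : ℕ∞}
    (hℓ : ℓ ∈ lowerBounds {n | ∃ x : Euc N, x ≠ 0 ∧ (Gorbit G x).encard = n}) :
    IsClosed (GSigma G ℓ) := by
  have hsigma : GSigma G ℓ = sphere 0 1 ∩ (fun x => (Gorbit G x).encard) ⁻¹' Iic ℓ := by
    ext x
    refine and_congr_right fun hx => ⟨le_of_eq, fun hxℓ => le_antisymm hxℓ (hℓ ⟨x, ?_, rfl⟩)⟩
    exact ne_zero_of_mem_unit_sphere ⟨x, hx⟩
  rw [hsigma]
  exact isClosed_sphere.inter (lowerSemicontinuous_encard_Gorbit.isClosed_preimage ℓ)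

theorem isCompact_GSigma {ℓ : ℕ∞}
    (hℓ : ℓ ∈ lowerBounds {n | ∃ x : Euc N, x ≠ 0 ∧ (Gorbit G x).encard = n}) :
    IsCompact (GSigma G ℓ) :=
  (isCompact_sphere 0 1).of_isClosed_subset (isClosed_GSigma hℓ) fun _ hx => hx.1

theorem GSigma_nonempty {ℓ : ℕ∞}
    (hℓ : ℓ ∈ {n | ∃ x : Euc N, x ≠ 0 ∧ (Gorbit G x).encard = n}) :
    (GSigma G ℓ).Nonempty := by
  obtain ⟨x, hx0, rfl⟩ := hℓ
  have hx : ‖x‖⁻¹ ≠ 0 := inv_ne_zero (norm_ne_zero_iff.mpr hx0)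
  refine ⟨‖x‖⁻¹ • x, mem_sphere_zero_iff_norm.mpr (norm_smul_inv_norm hx0), ?_⟩
  rw [Gorbit.smul_eq_image, (smul_right_injective (Euc N) hx).injOn.encard_image]

theorem Gmu_eq_inf' {T : Finset (Euc N ≃ₗᵢ[ℝ] Euc N)}
    (hTG : ↑T ⊆ (G : Set (Euc N ≃ₗᵢ[ℝ] Euc N))) {w : Euc N}
    (hinj : InjOn (fun g : Euc N ≃ₗᵢ[ℝ] Euc N => g w) T)
    (horb : Gorbit G w = (fun g : Euc N ≃ₗᵢ[ℝ] Euc N => g w) '' T) (hT : T.offDiag.Nonempty) :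
    Gmu G w = T.offDiag.inf' hT fun p => dist (p.1 w) (p.2 w) := by
  have h2 : 2 ≤ (Gorbit G w).encard := by
    obtain ⟨⟨g, h⟩, hp⟩ := hT
    obtain ⟨hg, hh, hgh⟩ := Finset.mem_offDiag.mp hp
    refine one_add_one_eq_two (R := ℕ∞) ▸ Order.add_one_le_of_lt (one_lt_encard_iff.mpr ?_)
    exact ⟨g w, h w, ⟨g, hTG hg, rfl⟩, ⟨h, hTG hh, rfl⟩, fun he => hgh (hinj hg hh he)⟩
  rw [Gmu, if_pos h2, Finset.inf'_eq_csInf_image]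
  congr 1
  ext d
  simp only [mem_ofPred_eq, Finset.coe_offDiag, mem_image, mem_offDiag, Finset.mem_coe,
    Prod.exists]
  constructor
  · rintro ⟨g, hg, h, hh, hgh, rfl⟩
    obtain ⟨g', hg', hg'w⟩ : g w ∈ (fun g : Euc N ≃ₗᵢ[ℝ] Euc N => g w) '' T := horb ▸ ⟨g, hg, rfl⟩
    obtain ⟨h', hh', hh'w⟩ : h w ∈ (fun g : Euc N ≃ₗᵢ[ℝ] Euc N => g w) '' T := horb ▸ ⟨h, hh, rfl⟩
    exact ⟨g', h', ⟨hg', hh', by rintro rfl; exact hgh (hg'w.symm.trans hh'w)⟩, by simp_all⟩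
  · rintro ⟨g, h, ⟨hg, hh, hgh⟩, rfl⟩
    exact ⟨g, hTG hg, h, hTG hh, fun he => hgh (hinj hg hh he), rfl⟩

theorem continuousOn_Gmu_GSigma {ℓ : ℕ∞} (hℓ : ℓ ≠ ⊤) : ContinuousOn (Gmu G) (GSigma G ℓ) := by
  by_cases h2 : 2 ≤ ℓ
  swap
  · have hcont : Continuous fun x : Euc N => 2 * ‖x‖ := by fun_prop
    refine hcont.continuousOn.congr fun x hx => ?_
    rw [Gmu, if_neg (hx.2 ▸ h2)]
  intro z hz
  obtain ⟨T, hTG, hinj, hTz⟩ :=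
    Gorbit.exists_finset_injOn_image_eq (encard_ne_top_iff.mp (hz.2 ▸ hℓ))
  have hTℓ : (T : Set (Euc N ≃ₗᵢ[ℝ] Euc N)).encard = ℓ := by
    rw [← hinj.encard_image, hTz, hz.2]
  have hT : T.offDiag.Nonempty := by
    obtain ⟨g, hg, h, hh, hgh⟩ : (T : Set (Euc N ≃ₗᵢ[ℝ] Euc N)).Nontrivial :=
      one_lt_encard_iff_nontrivial.mp (lt_of_lt_of_le (by norm_num) (hTℓ ▸ h2))
    exact ⟨(g, h), Finset.mem_offDiag.mpr ⟨hg, hh, hgh⟩⟩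
  have hcont : Continuous fun w => T.offDiag.inf' hT fun p => dist (p.1 w) (p.2 w) :=
    Continuous.finset_inf'_apply hT fun p _ => by fun_prop
  refine hcont.continuousWithinAt.congr_of_eventuallyEq ?_ (Gmu_eq_inf' hTG hinj hTz.symm hT)
  filter_upwards [self_mem_nhdsWithin, nhdsWithin_le_nhds
    (Filter.eventually_injOn_eval (fun g _ => g.continuous) hinj)] with w hw hinjw
  exact Gmu_eq_inf' hTG hinjw (Gorbit.eq_image_of_encard_le hTG hinjw (by rw [hw.2, hTℓ])) hT

end

theorem muG_attained_general {N : ℕ}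
    (G : Subgroup (Euc N ≃ₗᵢ[ℝ] Euc N))
    (ℓ : ℕ∞)
    (hℓ : IsLeast {n : ℕ∞ | ∃ x : Euc N, x ≠ 0 ∧ (Gorbit G x).encard = n} ℓ)
    (hfin : ℓ ≠ ⊤) :
    ∃ z ∈ GSigma G ℓ, ∀ w ∈ GSigma G ℓ, Gmu G z ≤ Gmu G w := by
  obtain ⟨z, hz, hmin⟩ := (isCompact_GSigma hℓ.2).exists_isMinOn (GSigma_nonempty hℓ.1)
    (continuousOn_Gmu_GSigma hfin)
  exact ⟨z, hz, fun w hw => isMinOn_iff.mp hmin w hw⟩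

theorem muG_attained {N : ℕ} (hN : 1 ≤ N)
    (G : Subgroup (Euc N ≃ₗᵢ[ℝ] Euc N))
    (hG : IsClosed ((fun g : Euc N ≃ₗᵢ[ℝ] Euc N =>
      g.toLinearIsometry.toContinuousLinearMap) '' (G : Set (Euc N ≃ₗᵢ[ℝ] Euc N))))
    (ℓ : ℕ∞)
    (hℓ : IsLeast {n : ℕ∞ | ∃ x : Euc N, x ≠ 0 ∧ (Gorbit G x).encard = n} ℓ)
    (hfin : ℓ ≠ ⊤) :
    ∃ z ∈ GSigma G ℓ, ∀ w ∈ GSigma G ℓ, Gmu G z ≤ Gmu G w :=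
  muG_attained_general G ℓ hℓ hfin
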